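/- Let $\phi:X\to(-\infty,+\infty]$ be approximately $\lambda$-convex with complete sublevel sets. Then $\phi$ is quadratically bounded from below: for every $o\in\mathrm{Dom}(\phi)$ and every $\kappa_o>-\lambda$, one has $\phi(x)+\frac{\kappa_o}2 d(x,o)^2\ge \phi(o)-\frac{(\phi(o)-m_o+\lambda^+/2)^2}{2(\lambda+\kappa_o)}-\frac{\lambda+\kappa_o}2$ for all $x\in X$, where $m_o:=\inf\{\phi(x):d(x,o)\le1\}>-\infty$. Moreover $x\mapsto\phi(x)-\frac\lambda2 d(x,o)^2$ is linearly bounded from below: $\phi(x)-\frac\lambda2 d(x,o)^2+(\phi(o)-m_o+\frac\lambda2)\,d(x,o)\ge m_o-\frac{\lambda^-}{2}$ for all $x$. -/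

import Mathlib

/-- `x` is a `(θ, ε)`-intermediate point between `x₀` and `x₁`. -/
def IsIntermediatePt {X : Type*} [MetricSpace X] (x₀ x₁ x : X) (θ ε : ℝ) : Prop :=
  dist x₀ x ^ 2 / θ + dist x x₁ ^ 2 / (1 - θ) ≤ dist x₀ x₁ ^ 2 * (1 + ε ^ 2 * θ * (1 - θ))

/-- `φ` is approximately `λ`-convex in `D`. -/
noncomputable def ApproxLambdaConvexOn {X : Type*} [MetricSpace X]
    (φ : X → EReal) (lam : ℝ) (D : Set X) : Prop :=
  ∀ x₀ ∈ D, ∀ x₁ ∈ D, φ x₀ ≠ ⊤ → φ x₁ ≠ ⊤ →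
    ∀ θ ∈ Set.Ioo (0:ℝ) 1, ∀ ε ∈ Set.Ioo (0:ℝ) 1, ∃ x ∈ D,
      IsIntermediatePt x₀ x₁ x θ ε ∧
      φ x ≤ (((1 - θ : ℝ)) : EReal) * φ x₀ + ((θ : ℝ) : EReal) * φ x₁ -
        (((lam - ε) / 2 * (θ * (1 - θ)) * dist x₀ x₁ ^ 2 : ℝ) : EReal)

/-!
If `φ` were unbounded below on the unit ball around `o`, approximate convexity would let us move
an arbitrarily short distance from any point towards a very low value of `φ` and decrease `φ` by
`1`; iterating gives a Cauchy sequence in a sublevel set along which `φ → -∞`, and its limit would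
have `φ = ⊥`. Hence `m_o > -∞`. For `d(x, o) = d ≥ 1`, the intermediate point with
`θ ≈ 1 / d` between `o` and `x` lies in the unit ball, so `m_o ≤ φ(x_θ)` and approximate
convexity give `φ(x) ≥ φ(o) + d (m_o - φ(o)) + λ (d² - d) / 2`; both bounds are then elementary.
-/

open Set Filter Topology Metric

lemma le_mul_one_add_of_sq_div_add_sq_div_le {θ ε a b d : ℝ} (hθ : θ ∈ Ioo 0 1)
    (hε₀ : 0 ≤ ε) (hε₁ : ε ≤ 1) (hd : 0 ≤ d) (hab : d ≤ a + b)
    (h : a ^ 2 / θ + b ^ 2 / (1 - θ) ≤ d ^ 2 * (1 + ε ^ 2 * θ * (1 - θ))) :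
    a ≤ θ * d * (1 + ε) := by
  obtain ⟨hθ₀, hθ₁⟩ := hθ
  have hθ' : 0 < 1 - θ := by linarith
  have hcleared :
      (1 - θ) * a ^ 2 + θ * b ^ 2 ≤ θ * (1 - θ) * d ^ 2 * (1 + ε ^ 2 * θ * (1 - θ)) := by
    rw [div_add_div _ _ hθ₀.ne' hθ'.ne', div_le_iff₀ (by positivity)] at h
    linarith
  rcases le_or_gt a d with had | hda
  · -- `(1 - θ) a² + θ (d - a)² = (a - θ d)² + θ (1 - θ) d²`
    have hsq : (a - θ * d) ^ 2 ≤ (ε * θ * (1 - θ) * d) ^ 2 := by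
      have : θ * (d - a) ^ 2 ≤ θ * b ^ 2 := by gcongr; linarith
      nlinarith
    have := abs_le_of_sq_le_sq' hsq (by positivity)
    nlinarith [mul_nonneg (mul_nonneg hε₀ hθ₀.le) (mul_nonneg hθ₀.le hd)]
  · exfalso
    have : (1 - θ) * a ^ 2 ≤ θ * (1 - θ) * a ^ 2 * (1 + ε ^ 2 * θ * (1 - θ)) := by
      have : θ * (1 - θ) * d ^ 2 * (1 + ε ^ 2 * θ * (1 - θ))
          ≤ θ * (1 - θ) * a ^ 2 * (1 + ε ^ 2 * θ * (1 - θ)) := by gcongr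
      nlinarith [mul_nonneg hθ₀.le (sq_nonneg b)]
    have : 0 < (1 - θ) ^ 2 * (1 - ε ^ 2 * θ ^ 2) * a ^ 2 := by
      have hεθ : ε * θ < 1 := by nlinarith
      have : 0 < 1 - ε ^ 2 * θ ^ 2 := by nlinarith [mul_nonneg hε₀ hθ₀.le]
      have : 0 < a := by linarith
      positivity
    nlinarith

lemma quadratic_bound_of_radial {lam κ m F d p : ℝ} (hμ : 0 < lam + κ) (hd : 0 ≤ d)
    (hnear : d ≤ 1 → m ≤ p) (hfar : 1 ≤ d → F + d * (m - F) + lam * (d ^ 2 - d) / 2 ≤ p) :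
    F - (F - m + max lam 0 / 2) ^ 2 / (2 * (lam + κ)) - (lam + κ) / 2 ≤ p + κ / 2 * d ^ 2 := by
  set A := F - m + max lam 0 / 2 with hA
  have hamgm : ∀ t, A * t - (lam + κ) * t ^ 2 / 2 ≤ A ^ 2 / (2 * (lam + κ)) := fun t => by
    rw [le_div_iff₀ (by positivity)]
    nlinarith [sq_nonneg ((lam + κ) * t - A)]
  have hlam : lam ≤ max lam 0 := le_max_left _ _
  have hlam₀ : 0 ≤ max lam 0 := le_max_right _ _
  rcases le_total d 1 with hd₁ | hd₁
  · have : -max lam 0 ≤ κ * d ^ 2 := by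
      rcases le_total 0 κ with hκ | hκ
      · nlinarith
      · nlinarith [mul_le_mul_of_nonpos_left (pow_le_one₀ hd hd₁ : d ^ 2 ≤ 1) hκ]
    nlinarith [hamgm 1, hnear hd₁]
  · nlinarith [hamgm d, hfar hd₁, mul_le_mul_of_nonneg_right hlam hd]

lemma linear_bound_of_radial {lam m F d p : ℝ} (hmF : m ≤ F) (hd : 0 ≤ d)
    (hnear : d ≤ 1 → m ≤ p) (hfar : 1 ≤ d → F + d * (m - F) + lam * (d ^ 2 - d) / 2 ≤ p) :
    m - max (-lam) 0 / 2 ≤ p - lam / 2 * d ^ 2 + (F - m + lam / 2) * d := by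
  have hlam : -lam ≤ max (-lam) 0 := le_max_left _ _
  have hlam₀ : 0 ≤ max (-lam) 0 := le_max_right _ _
  rcases le_total d 1 with hd₁ | hd₁
  · have : 0 ≤ d - d ^ 2 := by nlinarith
    have : d - d ^ 2 ≤ 1 := by nlinarith
    nlinarith [hnear hd₁, mul_nonneg (sub_nonneg.2 hmF) hd]
  · nlinarith [hfar hd₁]

section MetricSpace

variable {X : Type*} [MetricSpace X]

lemma IsIntermediatePt.dist_le {x₀ x₁ x : X} {θ ε : ℝ} (h : IsIntermediatePt x₀ x₁ x θ ε)
    (hθ : θ ∈ Ioo 0 1) (hε₀ : 0 ≤ ε) (hε₁ : ε ≤ 1) : dist x₀ x ≤ θ * dist x₀ x₁ * (1 + ε) :=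
  le_mul_one_add_of_sq_div_add_sq_div_le hθ hε₀ hε₁ dist_nonneg (dist_triangle _ _ _) h

lemma exists_eq_bot_of_forall_exists_dist_le_le_sub_one {f : X → EReal}
    (hcompl : ∀ c : ℝ, IsComplete {y | f y ≤ c})
    (hdesc : ∀ (c : ℝ) (y : X), f y ≤ c → ∀ δ > 0, ∃ y', dist y y' ≤ δ ∧ f y' ≤ (c - 1 : ℝ))
    {x₀ : X} {c : ℝ} (hx₀ : f x₀ ≤ c) : ∃ y, f y = ⊥ := by
  have hstep : ∀ (n : ℕ) (y : {y // f y ≤ (c - n : ℝ)}),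
      ∃ y' : {y' // f y' ≤ (c - (n + 1 : ℕ) : ℝ)}, dist y.1 y'.1 ≤ 1 * (1 / 2) ^ n := by
    rintro n ⟨y, hy⟩
    obtain ⟨y', hyy', hy'⟩ := hdesc _ y hy ((1 / 2) ^ n) (by positivity)
    exact ⟨⟨y', by rwa [Nat.cast_succ, ← sub_sub]⟩, by rwa [one_mul]⟩
  choose next hnext using hstep
  let u (n : ℕ) : {y // f y ≤ (c - n : ℝ)} :=
    Nat.rec (motive := fun n => {y // f y ≤ (c - n : ℝ)}) ⟨x₀, by simpa using hx₀⟩ next n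
  have hlevel {k n : ℕ} (hkn : k ≤ n) : f (u n).1 ≤ (c - k : ℝ) :=
    (u n).2.trans (EReal.coe_le_coe_iff.2 (by gcongr))
  obtain ⟨y, -, hy⟩ := cauchySeq_tendsto_of_isComplete (hcompl c)
    (fun n => by simpa using hlevel (Nat.zero_le n))
    (cauchySeq_of_le_geometric (1 / 2) 1 (by norm_num) fun n => hnext n (u n))
  refine ⟨y, (EReal.eq_bot_iff_forall_lt _).2 fun r => ?_⟩
  obtain ⟨k, hk⟩ := exists_nat_gt (c - r)
  have hyk : f y ≤ (c - k : ℝ) := (hcompl _).isClosed.mem_of_tendsto hy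
    (eventually_atTop.2 ⟨k, fun n hn => hlevel hn⟩)
  exact hyk.trans_lt (EReal.coe_lt_coe_iff.2 (by linarith))

namespace ApproxLambdaConvexOn

variable {φ : X → EReal} {lam : ℝ}

lemma exists_dist_le_of_le (hconv : ApproxLambdaConvexOn φ lam univ) {x₀ x₁ : X} {p q : ℝ}
    (h₀ : φ x₀ ≤ p) (h₁ : φ x₁ ≤ q) {θ ε : ℝ} (hθ : θ ∈ Ioo 0 1) (hε : ε ∈ Ioo 0 1) :
    ∃ x, dist x₀ x ≤ θ * dist x₀ x₁ * (1 + ε) ∧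
      φ x ≤ ((1 - θ) * p + θ * q - (lam - ε) / 2 * (θ * (1 - θ)) * dist x₀ x₁ ^ 2 : ℝ) := by
  obtain ⟨x, -, hx, hφx⟩ := hconv x₀ trivial x₁ trivial
    (ne_top_of_le_ne_top (EReal.coe_ne_top p) h₀) (ne_top_of_le_ne_top (EReal.coe_ne_top q) h₁)
    θ hθ ε hε
  refine ⟨x, hx.dist_le hθ hε.1.le hε.2.le, hφx.trans ?_⟩
  have hθ₀ : (0 : EReal) ≤ (θ : ℝ) := EReal.coe_nonneg.2 hθ.1.le
  have hθ₁ : (0 : EReal) ≤ (1 - θ : ℝ) := EReal.coe_nonneg.2 (by linarith [hθ.2])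
  calc _ ≤ ((1 - θ : ℝ) : EReal) * p + (θ : ℝ) * q -
        ((lam - ε) / 2 * (θ * (1 - θ)) * dist x₀ x₁ ^ 2 : ℝ) :=
        EReal.sub_le_sub (add_le_add (mul_le_mul_of_nonneg_left h₀ hθ₁)
          (mul_le_mul_of_nonneg_left h₁ hθ₀)) le_rfl
    _ = _ := by norm_cast

lemma exists_dist_le_le_sub_one (hconv : ApproxLambdaConvexOn φ lam univ) {S : Set X}
    (hS : Bornology.IsBounded S) (hunb : ∀ c : ℝ, ∃ z ∈ S, φ z < c)
    (c : ℝ) (y : X) (hy : φ y ≤ c) (δ : ℝ) (hδ : 0 < δ) :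
    ∃ y', dist y y' ≤ δ ∧ φ y' ≤ (c - 1 : ℝ) := by
  obtain ⟨R, hR₀, hR⟩ := hS.subset_closedBall_lt 0 y
  set θ := δ / (2 * (R + δ)) with hθdef
  have hθ : θ ∈ Ioo 0 1 := ⟨by positivity, by rw [div_lt_one (by positivity)]; linarith⟩
  -- `K` bounds the curvature term; `z` is so low that moving the fraction `θ` towards it gains
  -- `1 + K`, while `θ` is small enough to stay within `δ` of `y`.
  set K := (|lam| + 1) * R ^ 2
  obtain ⟨z, hzS, hz⟩ := hunb (c - (1 + K) / θ)
  obtain ⟨y', hyy', hy'⟩ :=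
    hconv.exists_dist_le_of_le hy hz.le hθ (by norm_num : (1 / 2 : ℝ) ∈ Ioo 0 1)
  have hyz : dist y z ≤ R := by simpa [dist_comm] using hR hzS
  refine ⟨y', ?_, hy'.trans (EReal.coe_le_coe_iff.2 ?_)⟩
  · calc dist y y' ≤ θ * R * (1 + 1 / 2) := hyy'.trans (by have := hθ.1; gcongr)
      _ = 3 / 4 * (R / (R + δ)) * δ := by rw [hθdef]; field_simp; ring
      _ ≤ δ := by
        have : R / (R + δ) ≤ 1 := by rw [div_le_one (by positivity)]; linarith
        nlinarith
  · have ht₀ : 0 ≤ θ * (1 - θ) * dist y z ^ 2 := by have := hθ.2; positivity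
    have ht : θ * (1 - θ) * dist y z ^ 2 ≤ R ^ 2 := by
      have : θ * (1 - θ) ≤ 1 := by nlinarith [hθ.1, hθ.2]
      have : dist y z ^ 2 ≤ R ^ 2 := by gcongr
      nlinarith
    have hcoef : -((lam - 1 / 2) / 2) ≤ |lam| + 1 := by
      linarith [neg_le_abs lam, abs_nonneg lam]
    have : θ * (c - (1 + K) / θ) = θ * c - (1 + K) := by
      rw [mul_sub, mul_div_cancel₀ _ hθ.1.ne']
    nlinarith [mul_le_mul_of_nonneg_right hcoef ht₀,
      mul_le_mul_of_nonneg_left ht (by positivity : (0 : ℝ) ≤ |lam| + 1)]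

lemma iInf_ne_bot_of_isBounded (hconv : ApproxLambdaConvexOn φ lam univ)
    (hbot : ∀ x, φ x ≠ ⊥) (hcompl : ∀ c : ℝ, IsComplete {y | φ y ≤ c}) {x₀ : X}
    (hx₀ : φ x₀ ≠ ⊤) {S : Set X} (hS : Bornology.IsBounded S) : ⨅ x ∈ S, φ x ≠ ⊥ := by
  obtain ⟨m, hm⟩ : ∃ m : ℝ, ∀ z ∈ S, (m : EReal) ≤ φ z := by
    by_contra! hunb
    obtain ⟨y, hy⟩ := exists_eq_bot_of_forall_exists_dist_le_le_sub_one hcompl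
      (hconv.exists_dist_le_le_sub_one hS hunb) (EReal.le_coe_toReal hx₀)
    exact hbot y hy
  exact ne_bot_of_le_ne_bot (EReal.coe_ne_bot m) (le_iInf₂ hm)

lemma le_of_one_le_dist (hconv : ApproxLambdaConvexOn φ lam univ) {o x : X} {m F p : ℝ}
    (hm : ∀ z, dist z o ≤ 1 → (m : EReal) ≤ φ z) (ho : φ o ≤ F) (hx : φ x ≤ p)
    (hd : 1 ≤ dist x o) :
    F + dist x o * (m - F) + lam * (dist x o ^ 2 - dist x o) / 2 ≤ p := by
  set d := dist x o with hddef
  have hd₀ : 0 < d := by linarith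
  have happrox : ∀ ε ∈ Ioo (0 : ℝ) 1,
      F + d * (1 + ε) * (m - F) + (lam - ε) * (d ^ 2 - d / (1 + ε)) / 2 ≤ p := by
    rintro ε ⟨hε₀, hε₁⟩
    have hθ : (d * (1 + ε))⁻¹ ∈ Ioo 0 1 := ⟨by positivity, inv_lt_one_of_one_lt₀ (by nlinarith)⟩
    obtain ⟨x', hox', hx'⟩ := hconv.exists_dist_le_of_le ho hx hθ ⟨hε₀, hε₁⟩
    rw [dist_comm o x, ← hddef] at hox' hx'
    have hball : dist x' o ≤ 1 := by
      rw [dist_comm]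
      convert hox' using 1
      field_simp
    have hm' := mul_le_mul_of_nonneg_left (EReal.coe_le_coe_iff.1 ((hm x' hball).trans hx'))
      (by positivity : 0 ≤ d * (1 + ε))
    field_simp at hm' ⊢
    linarith
  have htend : Tendsto (fun ε => F + d * (1 + ε) * (m - F) + (lam - ε) * (d ^ 2 - d / (1 + ε)) / 2)
      (𝓝[>] 0) (𝓝 (F + d * (m - F) + lam * (d ^ 2 - d) / 2)) := by
    have : ContinuousAt
        (fun ε => F + d * (1 + ε) * (m - F) + (lam - ε) * (d ^ 2 - d / (1 + ε)) / 2) 0 := by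
      fun_prop (disch := norm_num)
    simpa using this.tendsto.mono_left nhdsWithin_le_nhds
  exact le_of_tendsto htend (eventually_of_mem (Ioo_mem_nhdsGT one_pos) happrox)

end ApproxLambdaConvexOn

end MetricSpace

theorem stmt8_general {X : Type*} [MetricSpace X] (φ : X → EReal) (lam : ℝ)
    (hbot : ∀ y, φ y ≠ ⊥)
    (hcompl : ∀ c : ℝ, IsComplete {y : X | φ y ≤ (c : EReal)})
    (hconv : ApproxLambdaConvexOn φ lam Set.univ)
    (o : X) (ho : φ o ≠ ⊤) :
    letI M : EReal := ⨅ x ∈ {x : X | dist x o ≤ 1}, φ x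
    M ≠ ⊥ ∧
    (∀ κo : ℝ, -lam < κo → ∀ x : X,
      (((φ o).toReal - ((φ o).toReal - M.toReal + max lam 0 / 2) ^ 2 / (2 * (lam + κo))
          - (lam + κo) / 2 : ℝ) : EReal) ≤
        φ x + ((κo / 2 * dist x o ^ 2 : ℝ) : EReal)) ∧
    (∀ x : X,
      ((M.toReal - max (-lam) 0 / 2 : ℝ) : EReal) ≤
        φ x - ((lam / 2 * dist x o ^ 2 : ℝ) : EReal) +
          ((((φ o).toReal - M.toReal + lam / 2) * dist x o : ℝ) : EReal)) := by
  set M := ⨅ x ∈ {x : X | dist x o ≤ 1}, φ x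
  have hMbot : M ≠ ⊥ :=
    hconv.iInf_ne_bot_of_isBounded hbot hcompl ho (S := closedBall o 1) isBounded_closedBall
  have hM : (M.toReal : EReal) = M :=
    EReal.coe_toReal (ne_top_of_le_ne_top ho (iInf₂_le o (by simp))) hMbot
  have hball (z : X) (hz : dist z o ≤ 1) : (M.toReal : EReal) ≤ φ z := by
    rw [hM]; exact iInf₂_le z hz
  have hφo : φ o ≤ (φ o).toReal := EReal.le_coe_toReal ho
  have hMφo : M.toReal ≤ (φ o).toReal :=
    EReal.coe_le_coe_iff.1 ((hball o (by simp)).trans hφo)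
  have hnear {x : X} {p : ℝ} (hx : φ x = p) (hd : dist x o ≤ 1) : M.toReal ≤ p :=
    EReal.coe_le_coe_iff.1 (hx ▸ hball x hd)
  have hfar {x : X} {p : ℝ} (hx : φ x = p) :=
    hconv.le_of_one_le_dist hball hφo hx.le
  refine ⟨hMbot, fun κ hκ x => ?_, fun x => ?_⟩
  · cases h : φ x using EReal.rec with
    | bot => exact absurd h (hbot x)
    | coe p =>
      exact_mod_cast quadratic_bound_of_radial (by linarith) dist_nonneg (hnear h) (hfar h)
    | top => exact le_top.trans_eq (EReal.top_add_coe _).symm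
  · cases h : φ x using EReal.rec with
    | bot => exact absurd h (hbot x)
    | coe p => exact_mod_cast linear_bound_of_radial hMφo dist_nonneg (hnear h) (hfar h)
    | top => rw [EReal.top_sub_coe, EReal.top_add_coe]; exact le_top

theorem stmt8 {X : Type*} [MetricSpace X] (φ : X → EReal) (lam : ℝ)
    (hbot : ∀ y, φ y ≠ ⊥) (hproper : ∃ y, φ y ≠ ⊤)
    (hcompl : ∀ c : ℝ, IsComplete {y : X | φ y ≤ (c : EReal)})
    (hconv : ApproxLambdaConvexOn φ lam Set.univ)
    (o : X) (ho : φ o ≠ ⊤) :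
    letI M : EReal := ⨅ x ∈ {x : X | dist x o ≤ 1}, φ x
    M ≠ ⊥ ∧
    (∀ κo : ℝ, -lam < κo → ∀ x : X,
      (((φ o).toReal - ((φ o).toReal - M.toReal + max lam 0 / 2) ^ 2 / (2 * (lam + κo))
          - (lam + κo) / 2 : ℝ) : EReal) ≤
        φ x + ((κo / 2 * dist x o ^ 2 : ℝ) : EReal)) ∧
    (∀ x : X,
      ((M.toReal - max (-lam) 0 / 2 : ℝ) : EReal) ≤
        φ x - ((lam / 2 * dist x o ^ 2 : ℝ) : EReal) +
          ((((φ o).toReal - M.toReal + lam / 2) * dist x o : ℝ) : EReal)) :=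
  stmt8_general φ lam hbot hcompl hconv o ho
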